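/- Conservation of the recursive radii along Hamilton's equations for the Grushin space: fix n ≥ 1 and nonnegative integers α₁,…,α_n, and suppose x, p : I → ℝ^{n+1} are differentiable curves on a real interval I satisfying Hamilton's equations x_j'(t) = ξ_j(x(t))²·p_j(t) and p_j'(t) = −α_j·ξ_j(x(t))²·x_j(t)^{2α_j−1}·R_{j+1}(t)² for 1 ≤ j ≤ n+1 and all t ∈ I. Then for every 1 ≤ j ≤ n+1 the function t ↦ R_j(t)² is constant on I; in particular R_j(t)² = R_{j+1}(0)²·x_j(0)^{2α_j} + p_j(0)² for 1 ≤ j ≤ n and R_{n+1}(t)² = p_{n+1}(0)². -/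

import Mathlib

/-- Auxiliary downward recursion for the squared radii: `RsqAux top 0 = 0` (this is
`R_{top}² = R_{n+2}² = 0`) and `RsqAux top (k+1) = RsqAux top k * x_j^(2α_j) + p_j²`
where `j = top - (k+1)`. -/
noncomputable def RsqAux (α : ℕ → ℕ) (x p : ℕ → ℝ) (top : ℕ) : ℕ → ℝ
  | 0 => 0
  | (k + 1) =>
      RsqAux α x p top k * x (top - (k + 1)) ^ (2 * α (top - (k + 1)))
        + p (top - (k + 1)) ^ 2

/-- The squared radius `R_j²` of the Grushin Hamiltonian system on `ℝ^{n+1}`: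
`R_{n+2}² := 0` and `R_j² := R_{j+1}² · x_j^(2α_j) + p_j²` for `j = n+1` down to `1`. -/
noncomputable def Rsq (n : ℕ) (α : ℕ → ℕ) (x p : ℕ → ℝ) (j : ℕ) : ℝ :=
  RsqAux α x p (n + 2) (n + 2 - j)

/-- conservation of the recursive radii along Hamilton's equations for
the Grushin space `𝔾^{n+1}_α`.  Coordinates are indexed by `1 ≤ j ≤ n+1`, with
`ξ_j(x) = ∏_{i=1}^{j-1} x_i^{α_i}` and `α_{n+1} = 0`.  If the curves `x, p` satisfy
`x_j' = ξ_j(x)² p_j` and `p_j' = -α_j ξ_j(x)² x_j^(2α_j - 1) R_{j+1}²` on the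
interval `I` (containing `0`), then every `R_j²` is constant on `I`, and in
particular `R_j(t)² = R_{j+1}(0)² x_j(0)^(2α_j) + p_j(0)²` for `1 ≤ j ≤ n` and
`R_{n+1}(t)² = p_{n+1}(0)²`. -/
theorem grushin_radii_conserved (n : ℕ) (hn : 1 ≤ n) (α : ℕ → ℕ) (hα : α (n + 1) = 0)
    (I : Set ℝ) (hI : Convex ℝ I) (h0 : (0:ℝ) ∈ I)
    (x p : ℝ → ℕ → ℝ)
    (hx : ∀ j ∈ Finset.Icc 1 (n + 1), ∀ t ∈ I,
      HasDerivAt (fun τ => x τ j)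
        ((∏ i ∈ Finset.Ico 1 j, x t i ^ α i) ^ 2 * p t j) t)
    (hp : ∀ j ∈ Finset.Icc 1 (n + 1), ∀ t ∈ I,
      HasDerivAt (fun τ => p τ j)
        (-(α j : ℝ) * (∏ i ∈ Finset.Ico 1 j, x t i ^ α i) ^ 2
          * x t j ^ (2 * α j - 1) * Rsq n α (x t) (p t) (j + 1)) t) :
    (∀ j ∈ Finset.Icc 1 (n + 1), ∀ t ∈ I, ∀ t' ∈ I,
      Rsq n α (x t) (p t) j = Rsq n α (x t') (p t') j) ∧
    (∀ j ∈ Finset.Icc 1 n, ∀ t ∈ I,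
      Rsq n α (x t) (p t) j
        = Rsq n α (x 0) (p 0) (j + 1) * x 0 j ^ (2 * α j) + p 0 j ^ 2) ∧
    (∀ t ∈ I, Rsq n α (x t) (p t) (n + 1) = p 0 (n + 1) ^ 2) := by
  -- derivative zero for every level k ≤ n+1 of the auxiliary recursion
  have key : ∀ k, k ≤ n + 1 → ∀ t ∈ I,
      HasDerivAt (fun τ => RsqAux α (x τ) (p τ) (n + 2) k) 0 t := by
    intro k
    induction k with
    | zero =>
      intro _ t ht
      simpa [RsqAux] using (hasDerivAt_const t (0:ℝ))
    | succ k ih =>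
      intro hk t ht
      set j := n + 2 - (k + 1) with hj
      have hj1 : 1 ≤ j := by omega
      have hj2 : j ≤ n + 1 := by omega
      have hjmem : j ∈ Finset.Icc 1 (n + 1) := Finset.mem_Icc.2 ⟨hj1, hj2⟩
      have hR : Rsq n α (x t) (p t) (j + 1) = RsqAux α (x t) (p t) (n + 2) k := by
        have : n + 2 - (j + 1) = k := by omega
        simp [Rsq, this]
      have hxd := hx j hjmem t ht
      have hpd := hp j hjmem t ht
      rw [hR] at hpd
      have hIH := ih (by omega) t ht
      have h1 : HasDerivAt (fun τ => RsqAux α (x τ) (p τ) (n + 2) k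
          * x τ j ^ (2 * α j) + p τ j ^ 2)
          (0 * x t j ^ (2 * α j)
            + RsqAux α (x t) (p t) (n + 2) k
              * ((2 * α j : ℕ) * x t j ^ (2 * α j - 1)
                * ((∏ i ∈ Finset.Ico 1 j, x t i ^ α i) ^ 2 * p t j))
            + (2 * p t j ^ 1
                * (-(α j : ℝ) * (∏ i ∈ Finset.Ico 1 j, x t i ^ α i) ^ 2
                  * x t j ^ (2 * α j - 1) * RsqAux α (x t) (p t) (n + 2) k))) t :=
        (hIH.mul (hxd.pow _)).add (by simpa using hpd.fun_pow 2)
      have heq : (0 * x t j ^ (2 * α j)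
            + RsqAux α (x t) (p t) (n + 2) k
              * ((2 * α j : ℕ) * x t j ^ (2 * α j - 1)
                * ((∏ i ∈ Finset.Ico 1 j, x t i ^ α i) ^ 2 * p t j))
            + (2 * p t j ^ 1
                * (-(α j : ℝ) * (∏ i ∈ Finset.Ico 1 j, x t i ^ α i) ^ 2
                  * x t j ^ (2 * α j - 1) * RsqAux α (x t) (p t) (n + 2) k))) = 0 := by
        push_cast
        ring
      rw [heq] at h1
      simp only [RsqAux, ← hj]
      exact h1
  -- constancy on I
  have const : ∀ k, k ≤ n + 1 → ∀ t ∈ I, ∀ t' ∈ I,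
      RsqAux α (x t) (p t) (n + 2) k = RsqAux α (x t') (p t') (n + 2) k := by
    intro k hk t ht t' ht'
    have := Convex.norm_image_sub_le_of_norm_hasDerivWithin_le
      (f := fun τ => RsqAux α (x τ) (p τ) (n + 2) k) (f' := fun _ => 0) (s := I) (C := 0)
      (fun s hs => ((key k hk s hs).hasDerivWithinAt)) (fun s _ => by simp) hI ht' ht
    simp only [zero_mul] at this
    have : RsqAux α (x t) (p t) (n + 2) k - RsqAux α (x t') (p t') (n + 2) k = 0 := by
      have h := this
      rw [norm_le_zero_iff] at h
      exact h
    linarith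
  have main : ∀ j ∈ Finset.Icc 1 (n + 1), ∀ t ∈ I, ∀ t' ∈ I,
      Rsq n α (x t) (p t) j = Rsq n α (x t') (p t') j := by
    intro j hj t ht t' ht'
    rw [Finset.mem_Icc] at hj
    exact const (n + 2 - j) (by omega) t ht t' ht'
  refine ⟨main, ?_, ?_⟩
  · intro j hj t ht
    rw [Finset.mem_Icc] at hj
    have hmem : j ∈ Finset.Icc 1 (n + 1) := Finset.mem_Icc.2 ⟨hj.1, by omega⟩
    rw [main j hmem t ht 0 h0]
    have hk : n + 2 - j = (n + 1 - j) + 1 := by omega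
    have hi : n + 2 - ((n + 1 - j) + 1) = j := by omega
    have hk2 : n + 2 - (j + 1) = n + 1 - j := by omega
    rw [Rsq, hk]
    simp [RsqAux, hi, Rsq, hk2]
  · intro t ht
    rw [main (n + 1) (Finset.mem_Icc.2 ⟨by omega, le_refl _⟩) t ht 0 h0]
    have : n + 2 - (n + 1) = 1 := by omega
    rw [Rsq, this]
    simp [RsqAux]
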